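/- For any groupoids K and H, the map sending a functor F : K → H to S̃(F) is a bijection from Hom_Gpd(K,H) onto the set of morphisms of quasi-schemoids G : S̃(K) → S̃(H) that preserve base points, i.e. such that G({1_x | x ∈ ob(K)}) ⊆ {1_y | y ∈ ob(H)}; that is, S̃ : Gpd → (qASmd)₀ is fully faithful. -/

import Mathlib

open CategoryTheory

universe v u

/-- The set of all morphisms of a category, bundled with their endpoints. -/
def Mor (C : Type u) [Category.{v} C] : Type max u v := Σ (x y : C), x ⟶ y

namespace Mor
variable {C : Type u} [Category.{v} C]
/-- The source of a morphism. -/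
def src (m : Mor C) : C := m.1
/-- The target of a morphism. -/
def tgt (m : Mor C) : C := m.2.1
end Mor

/-- The identity of `x` as an element of `Mor C`. -/
def idMor {C : Type u} [Category.{v} C] (x : C) : Mor C := ⟨x, x, 𝟙 x⟩

/-- Bundle a morphism into `Mor C`. -/
def mk3 {C : Type u} [Category.{v} C] {x y : C} (f : x ⟶ y) : Mor C := ⟨x, y, f⟩

/-- `IsComp a b m` holds iff `a` and `b` are composable (the target of `b` is the
source of `a`) and the composite `a ∘ b` equals `m`. -/
def IsComp {C : Type u} [Category.{v} C] (a b m : Mor C) : Prop :=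
  ∃ (x y z : C) (f : x ⟶ y) (g : y ⟶ z), b = mk3 f ∧ a = mk3 g ∧ m = mk3 (f ≫ g)

/-- The fiber over `m` of the concatenation map `π_{στ} : σ ×_{ob C} τ → mor C`,
where `σ` is the class of the second (outer) factor and `τ` that of the first
(inner) factor. -/
def compFiber {C : Type u} [Category.{v} C] (σ τ : Set (Mor C)) (m : Mor C) :
    Set (Mor C × Mor C) :=
  {p | p.1 ∈ σ ∧ p.2 ∈ τ ∧ IsComp p.1 p.2 m}

/-- A quasi-schemoid: a small category together with a partition of its set of
morphisms satisfying the concatenation axiom. -/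
structure QuasiSchemoid (C : Type u) [Category.{v} C] where
  part : Set (Set (Mor C))
  isPartition : Setoid.IsPartition part
  concat : ∀ σ ∈ part, ∀ τ ∈ part, ∀ μ ∈ part, ∀ f ∈ μ, ∀ g ∈ μ,
    Nonempty ((compFiber σ τ f : Set (Mor C × Mor C)) ≃ (compFiber σ τ g : Set (Mor C × Mor C)))

/-- `p^μ_{τσ} = n` : every `m ∈ μ` has exactly `n` factorizations with outer factor
in `τ` and inner factor in `σ`. -/
def structEq {C : Type u} [Category.{v} C] (τ σ μ : Set (Mor C)) (n : ℕ) : Prop :=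
  ∀ m ∈ μ, Nat.card (compFiber τ σ m) = n

/-- The set `J₀` of identities. -/
def J0 (C : Type u) [Category.{v} C] : Set (Mor C) := {m | ∃ x : C, m = idMor x}

/-- A quasi-schemoid is unital if every class meeting `J₀` is contained in `J₀`. -/
def QuasiSchemoid.IsUnital {C : Type u} [Category.{v} C] (Q : QuasiSchemoid C) : Prop :=
  ∀ σ ∈ Q.part, (σ ∩ J0 C).Nonempty → σ ⊆ J0 C

/-- A contravariant endofunctor. -/
structure ContraFunctor (C : Type u) [Category.{v} C] where
  obj : C → C
  map : ∀ {x y : C}, (x ⟶ y) → (obj y ⟶ obj x)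
  map_id : ∀ x : C, map (𝟙 x) = 𝟙 (obj x)
  map_comp : ∀ {x y z : C} (f : x ⟶ y) (g : y ⟶ z), map (f ≫ g) = map g ≫ map f

/-- The action of a contravariant functor on bundled morphisms. -/
def ContraFunctor.onMor {C : Type u} [Category.{v} C] (T : ContraFunctor C) (m : Mor C) :
    Mor C :=
  ⟨T.obj m.2.1, T.obj m.1, T.map m.2.2⟩

/-- The set `J` of endomorphisms. -/
def JEndo (C : Type u) [Category.{v} C] : Set (Mor C) := {m | m.src = m.tgt}

/-- An association schemoid. -/
structure AssnSchemoid (C : Type u) [Category.{v} C] extends QuasiSchemoid C where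
  T : ContraFunctor C
  T_invol : ∀ m : Mor C, T.onMor (T.onMor m) = m
  T_part : ∀ σ ∈ part, T.onMor '' σ ∈ part
  endo : ∀ σ ∈ part, (σ ∩ JEndo C).Nonempty → σ ⊆ JEndo C

universe v₂ u₂

/-- The action of a functor on bundled morphisms. -/
def morMap {C : Type u} {D : Type u₂} [Category.{v} C] [Category.{v₂} D] (F : C ⥤ D)
    (m : Mor C) : Mor D :=
  ⟨F.obj m.1, F.obj m.2.1, F.map m.2.2⟩

/-- A functor is a morphism of quasi-schemoids if each class of the source partition is
mapped into some class of the target partition. -/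
def IsQSMor {C : Type u} {D : Type u₂} [Category.{v} C] [Category.{v₂} D]
    (SC : Set (Set (Mor C))) (SD : Set (Set (Mor D))) (F : C ⥤ D) : Prop :=
  ∀ σ ∈ SC, ∃ τ ∈ SD, morMap F '' σ ⊆ τ

/-- A morphism of association schemoids: a morphism of quasi-schemoids commuting with the
contravariant involutions. -/
def IsASMor {C : Type u} {D : Type u₂} [Category.{v} C] [Category.{v₂} D]
    (SC : Set (Set (Mor C))) (SD : Set (Set (Mor D)))
    (TC : ContraFunctor C) (TD : ContraFunctor D) (F : C ⥤ D) : Prop :=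
  IsQSMor SC SD F ∧ ∀ m : Mor C, morMap F (TC.onMor m) = TD.onMor (morMap F m)

/-- `S₀` : the classes containing some identity. -/
def S0 {C : Type u} [Category.{v} C] (S : Set (Set (Mor C))) : Set (Set (Mor C)) :=
  {α | α ∈ S ∧ ∃ x : C, idMor x ∈ α}

/-- `_αS_β = {σ ∈ S | p^σ_{σα} = p^σ_{βσ} = 1}`. -/
def hom2 {C : Type u} [Category.{v} C] (S : Set (Set (Mor C))) (α β : Set (Mor C)) :
    Set (Set (Mor C)) :=
  {σ | σ ∈ S ∧ structEq σ α σ 1 ∧ structEq β σ σ 1}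

/-- The partition class containing a given morphism. -/
def classOf {C : Type u} [Category.{v} C] (S : Set (Set (Mor C))) (m : Mor C) :
    Set (Mor C) :=
  {m' | ∃ σ ∈ S, m ∈ σ ∧ m' ∈ σ}

/-- The underlying objects of the schemoid `S̃(H)` : the morphisms of `H`. -/
def TildeCat (H : Type u) [Category.{v} H] : Type max u v := Mor H

/-- Reinterpret an object of `TildeCat H` as a morphism of `H`. -/
def TildeCat.toMor {H : Type u} [Category.{v} H] (g : TildeCat H) : Mor H := g

/-- The category `S̃(H)` : `Hom(g,h)` has exactly one element `(h,g)` when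
`t(h) = t(g)`, and is empty otherwise. -/
instance TildeCat.category (H : Type u) [Category.{v} H] : Category (TildeCat H) where
  Hom g h := PLift (g.toMor.tgt = h.toMor.tgt)
  id _ := ⟨rfl⟩
  comp p q := ⟨p.down.trans q.down⟩
  id_comp _ := rfl
  comp_id _ := rfl
  assoc _ _ _ := rfl

/-- `S̃(H)` is a groupoid. -/
instance TildeCat.groupoid (H : Type u) [Category.{v} H] : Groupoid (TildeCat H) where
  inv p := ⟨p.down.symm⟩
  inv_comp _ := rfl
  comp_inv _ := rfl

/-- For `g, h : mor H` with `t(g) = t(h)`, the morphism `h⁻¹ ∘ g` of the groupoid `H`. -/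
def conjDiff {H : Type u} [Groupoid.{v} H] (g h : Mor H) (e : Mor.tgt g = Mor.tgt h) :
    Mor H :=
  ⟨g.1, h.1, g.2.2 ≫ eqToHom e ≫ Groupoid.inv h.2.2⟩

/-- The class `G_f = {(k,l) | k⁻¹ ∘ l = f}` of the partition of `mor(S̃(H))`:
the morphism `(h,g) : g → h` belongs to `G_f` iff `h⁻¹ ∘ g = f`. -/
def tildeClass {H : Type u} [Groupoid.{v} H] (f : Mor H) : Set (Mor (TildeCat H)) :=
  {m | conjDiff (TildeCat.toMor m.1) (TildeCat.toMor m.2.1) m.2.2.down = f}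

/-- The partition of `mor(S̃(H))` into the classes `G_f`. -/
def tildePart (H : Type u) [Groupoid.{v} H] : Set (Set (Mor (TildeCat H))) :=
  {s | ∃ f : Mor H, s = tildeClass f}

/-- The contravariant involution of `S̃(H)` : `T(f) = f` on objects and
`T(h,g) = (g,h)` on morphisms. -/
def tildeT (H : Type u) [Category.{v} H] : ContraFunctor (TildeCat H) where
  obj g := g
  map p := ⟨p.down.symm⟩
  map_id _ := rfl
  map_comp _ _ := rfl

/-- The functor `S̃(F) : S̃(K) → S̃(H)` induced by a functor `F : K ⥤ H`. -/
def tildeMap {K : Type u} {H : Type u} [Category.{v} K] [Category.{v} H] (F : K ⥤ H) :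
    TildeCat K ⥤ TildeCat H where
  obj g := morMap F g
  map p := ⟨congrArg F.obj p.down⟩
  map_id _ := rfl
  map_comp _ _ := rfl

/-- The base points of `S̃(H)` : the identities of `H`, viewed as objects of `S̃(H)`. -/
def tildeBase (H : Type u) [Category.{v} H] : Set (TildeCat H) :=
  {m | ∃ x : H, m = idMor x}


/-!
A functor `F` is recovered from `S̃(F)`, which sends the object `f` of `S̃(K)` to `F f`.
Conversely, let `G` be a based morphism and put `F x := s(G(1_x))`. The identities of `g` and of
`1_{s g}` in `S̃(K)` lie in the same class `G_{1_{s g}}`, so `G(g)` starts at `F(s g)`; the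
morphism `g → 1_{t g}` of `S̃(K)` shows that `G(g)` ends at `F(t g)`. Hence `F f := G(f)` is a
morphism `F x ⟶ F y`. It is functorial because the morphisms `f ≫ g → g` and `f → 1_y` of
`S̃(K)` both lie in `G_f`, so that `G(f ≫ g) ≫ G(g)⁻¹ = G(f)`. By construction `S̃(F) = G`.
-/

namespace Mor

variable {C : Type u} [Category.{v} C]

lemma heq_of_mk3_eq {x y x' y' : C} {f : x ⟶ y} {f' : x' ⟶ y'} (h : mk3 f = mk3 f') :
    HEq f f' := by
  obtain rfl : x = x' := congrArg Sigma.fst h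
  exact (Sigma.mk.inj_iff.mp (eq_of_heq (Sigma.mk.inj_iff.mp h).2)).2

lemma mk3_injective {x y : C} : Function.Injective (mk3 : (x ⟶ y) → Mor C) :=
  fun _ _ h => eq_of_heq (heq_of_mk3_eq h)

def toHom (m : Mor C) {x y : C} (hs : m.src = x) (ht : m.tgt = y) : x ⟶ y :=
  eqToHom hs.symm ≫ m.2.2 ≫ eqToHom ht

lemma mk3_toHom (m : Mor C) {x y : C} (hs : m.src = x) (ht : m.tgt = y) :
    mk3 (m.toHom hs ht) = m := by
  obtain ⟨a, b, u⟩ := m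
  change a = x at hs
  change b = y at ht
  subst hs ht
  show mk3 (eqToHom rfl ≫ u ≫ eqToHom rfl) = mk3 u
  simp only [eqToHom_refl, Category.id_comp, Category.comp_id]

end Mor

section ConjDiff

variable {H : Type u} [Groupoid.{v} H]

lemma conjDiff_congr {a a' b b' : Mor H} (ha : a = a') (hb : b = b')
    (e : a.tgt = b.tgt) (e' : a'.tgt = b'.tgt) : conjDiff a b e = conjDiff a' b' e' := by
  subst ha hb
  rfl

lemma conjDiff_mk3 {x y z : H} (f : x ⟶ z) (g : y ⟶ z) (e : (mk3 f).tgt = (mk3 g).tgt) :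
    conjDiff (mk3 f) (mk3 g) e = mk3 (f ≫ inv g) :=
  congrArg mk3 (by simp [Groupoid.inv_eq_inv] : f ≫ eqToHom rfl ≫ Groupoid.inv g = f ≫ inv g)

lemma conjDiff_self (g : Mor H) (e : g.tgt = g.tgt) : conjDiff g g e = idMor g.src := by
  obtain ⟨x, y, f⟩ := g
  exact (conjDiff_mk3 f f e).trans (congrArg mk3 (IsIso.hom_inv_id f))

end ConjDiff

lemma IsQSMor.conjDiff_obj_eq {K H : Type u} [Groupoid.{v} K] [Groupoid.{v} H]
    {G : TildeCat K ⥤ TildeCat H} (hG : IsQSMor (tildePart K) (tildePart H) G)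
    {a b a' b' : TildeCat K} (e : a.toMor.tgt = b.toMor.tgt) (e' : a'.toMor.tgt = b'.toMor.tgt)
    (h : conjDiff a b e = conjDiff a' b' e') :
    conjDiff (G.obj a) (G.obj b) (G.map ⟨e⟩).down =
      conjDiff (G.obj a') (G.obj b') (G.map ⟨e'⟩).down := by
  obtain ⟨_, ⟨f, rfl⟩, hsub⟩ := hG (tildeClass (conjDiff a b e)) ⟨_, rfl⟩
  exact (hsub ⟨⟨a, b, ⟨e⟩⟩, rfl, rfl⟩).trans (hsub ⟨⟨a', b', ⟨e'⟩⟩, h.symm, rfl⟩).symm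

namespace TildeCat

lemma functor_ext {D : Type u₂} [Category.{v₂} D] {H : Type u} [Category.{v} H]
    {G G' : D ⥤ TildeCat H} (h : ∀ d, G.obj d = G'.obj d) : G = G' :=
  -- parallel morphisms of `S̃(H)` are equal by proof irrelevance
  CategoryTheory.Functor.ext h fun _ _ _ => rfl

variable {K : Type u} {H : Type u}

section Category

variable [Category.{v} K] [Category.{v} H]

lemma tgt_obj_eq (G : TildeCat K ⥤ TildeCat H) {g h : TildeCat K}
    (e : g.toMor.tgt = h.toMor.tgt) : (G.obj g).toMor.tgt = (G.obj h).toMor.tgt :=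
  (G.map ⟨e⟩).down

lemma tildeMap_injective :
    Function.Injective (tildeMap : (K ⥤ H) → (TildeCat K ⥤ TildeCat H)) := by
  intro F F' h
  have hobj (x : K) : F.obj x = F'.obj x :=
    congrArg (fun G : TildeCat K ⥤ TildeCat H => (G.obj (idMor x)).toMor.src) h
  refine Functor.hext hobj fun x y f => Mor.heq_of_mk3_eq ?_
  exact (congrArg (fun G : TildeCat K ⥤ TildeCat H => G.obj (mk3 f)) h :)

end Category

variable [Groupoid.{v} K] [Groupoid.{v} H]

lemma conjDiff_tildeMap_obj (F : K ⥤ H) {a b : TildeCat K} (e : a.toMor.tgt = b.toMor.tgt) :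
    conjDiff ((tildeMap F).obj a) ((tildeMap F).obj b) ((tildeMap F).map ⟨e⟩).down =
      morMap F (conjDiff a b e) := by
  obtain ⟨a₁, a₂, p⟩ := a
  obtain ⟨b₁, b₂, q⟩ := b
  change a₂ = b₂ at e
  subst e
  show mk3 (F.map p ≫ eqToHom rfl ≫ Groupoid.inv (F.map q)) =
    mk3 (F.map (p ≫ eqToHom rfl ≫ Groupoid.inv q))
  simp [Groupoid.inv_eq_inv]

lemma isQSMor_tildeMap (F : K ⥤ H) : IsQSMor (tildePart K) (tildePart H) (tildeMap F) := by
  rintro _ ⟨f, rfl⟩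
  refine ⟨_, ⟨morMap F f, rfl⟩, ?_⟩
  rintro _ ⟨⟨a, b, ⟨e⟩⟩, hm, rfl⟩
  exact (conjDiff_tildeMap_obj F e).trans (congrArg (morMap F) hm)

lemma tildeMap_image_tildeBase_subset (F : K ⥤ H) :
    (tildeMap F).obj '' tildeBase K ⊆ tildeBase H := by
  rintro _ ⟨_, ⟨x, rfl⟩, rfl⟩
  exact ⟨F.obj x, congrArg mk3 (F.map_id x)⟩

section Preimage

variable (G : TildeCat K ⥤ TildeCat H)

def preimageObj (x : K) : H := (G.obj (idMor x)).toMor.src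

lemma obj_idMor_eq (hB : G.obj '' tildeBase K ⊆ tildeBase H) (x : K) :
    G.obj (idMor x) = idMor (preimageObj G x) := by
  obtain ⟨y, hy⟩ := hB ⟨idMor x, ⟨x, rfl⟩, rfl⟩
  rw [preimageObj, hy]
  rfl

lemma src_obj_eq (hQ : IsQSMor (tildePart K) (tildePart H) G) (g : TildeCat K) :
    (G.obj g).toMor.src = preimageObj G g.toMor.src := by
  have h := hQ.conjDiff_obj_eq (a := g) (b := g) (a' := idMor g.toMor.src)
    (b' := idMor g.toMor.src) rfl rfl
    ((conjDiff_self g.toMor _).trans (conjDiff_self (idMor g.toMor.src) rfl).symm)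
  have h' := (conjDiff_self _ _).symm.trans (h.trans (conjDiff_self _ _))
  exact (congrArg Mor.src h' :)

lemma tgt_obj_eq_preimageObj (hB : G.obj '' tildeBase K ⊆ tildeBase H) (g : TildeCat K) :
    (G.obj g).toMor.tgt = preimageObj G g.toMor.tgt :=
  (tgt_obj_eq G (g := g) (h := idMor g.toMor.tgt) rfl).trans (by rw [obj_idMor_eq G hB]; rfl)

variable (hQ : IsQSMor (tildePart K) (tildePart H) G) (hB : G.obj '' tildeBase K ⊆ tildeBase H)

def preimageMap {x y : K} (f : x ⟶ y) : preimageObj G x ⟶ preimageObj G y :=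
  (G.obj (mk3 f)).toMor.toHom (src_obj_eq G hQ (mk3 f)) (tgt_obj_eq_preimageObj G hB (mk3 f))

lemma mk3_preimageMap {x y : K} (f : x ⟶ y) : mk3 (preimageMap G hQ hB f) = G.obj (mk3 f) :=
  Mor.mk3_toHom _ _ _

lemma preimageMap_id (x : K) : preimageMap G hQ hB (𝟙 x) = 𝟙 (preimageObj G x) :=
  Mor.mk3_injective ((mk3_preimageMap G hQ hB (𝟙 x)).trans (obj_idMor_eq G hB x))

lemma conjDiff_obj_mk3 {x y z : K} (f : x ⟶ z) (g : y ⟶ z)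
    (e : (G.obj (mk3 f)).toMor.tgt = (G.obj (mk3 g)).toMor.tgt) :
    conjDiff (G.obj (mk3 f)) (G.obj (mk3 g)) e =
      mk3 (preimageMap G hQ hB f ≫ inv (preimageMap G hQ hB g)) :=
  (conjDiff_congr (mk3_preimageMap G hQ hB f).symm (mk3_preimageMap G hQ hB g).symm e rfl).trans
    (conjDiff_mk3 (preimageMap G hQ hB f) (preimageMap G hQ hB g) rfl)

lemma preimageMap_comp {x y z : K} (f : x ⟶ y) (g : y ⟶ z) :
    preimageMap G hQ hB (f ≫ g) = preimageMap G hQ hB f ≫ preimageMap G hQ hB g := by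
  have h := hQ.conjDiff_obj_eq (a := mk3 (f ≫ g)) (b := mk3 g) (a' := mk3 f) (b' := mk3 (𝟙 y))
    rfl rfl <| (conjDiff_mk3 (f ≫ g) g rfl).trans <|
      (congrArg mk3 (by simp)).trans (conjDiff_mk3 f (𝟙 y) rfl).symm
  rw [conjDiff_obj_mk3 G hQ hB, conjDiff_obj_mk3 G hQ hB] at h
  have h' := Mor.mk3_injective h
  rw [preimageMap_id, IsIso.inv_id, Category.comp_id] at h'
  exact (IsIso.comp_inv_eq _).mp h'

def preimageFunctor : K ⥤ H where
  obj := preimageObj G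
  map := preimageMap G hQ hB
  map_id := preimageMap_id G hQ hB
  map_comp := preimageMap_comp G hQ hB

lemma tildeMap_preimageFunctor : tildeMap (preimageFunctor G hQ hB) = G :=
  functor_ext fun g => mk3_preimageMap G hQ hB g.2.2

end Preimage

end TildeCat

open TildeCat in
/-- Corollary 3.3 of Kuribayashi–Matsuo: `S̃ : Gpd → (qASmd)₀` is fully faithful, i.e.
`F ↦ S̃(F)` is a bijection from `Hom_Gpd(K,H)` onto the set of morphisms of
quasi-schemoids `S̃(K) → S̃(H)` preserving the base points. -/
theorem tildeMap_bijOn_based_morphisms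
    {K : Type u} {H : Type u} [Groupoid.{v} K] [Groupoid.{v} H] :
    Set.BijOn (fun F : K ⥤ H => tildeMap F) Set.univ
      {G : TildeCat K ⥤ TildeCat H |
        IsQSMor (tildePart K) (tildePart H) G ∧ G.obj '' tildeBase K ⊆ tildeBase H} :=
  ⟨fun F _ => ⟨isQSMor_tildeMap F, tildeMap_image_tildeBase_subset F⟩,
    tildeMap_injective.injOn,
    fun G ⟨hQ, hB⟩ => ⟨preimageFunctor G hQ hB, trivial, tildeMap_preimageFunctor G hQ hB⟩⟩
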